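/- In the one-dimensional linear Gaussian bandit with Shannon entropy, for every i ∈ [K] and λ > 0, L^λ_i(m,d) = ((c_i^⊤ d c_i + P_i^{−1})^{−1}/(2λ)) · ( ∑_{j=1}^K ν^λ_j(f(m,d)) g_j(m,d)² (c_i^⊤ d c_j)² − ( ∑_{j=1}^K ν^λ_j(f(m,d)) g_j(m,d) (c_i^⊤ d c_j) )² ), where g_j(m,d) := ∫_ℝ r_j'(c_j^⊤m + (c_j^⊤ d c_j + P_j^{−1})^{1/2} z) φ(z) dz. -/

import Mathlib

open MeasureTheory

noncomputable section

namespace ARC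

variable {K p : ℕ}

/-- Standard Gaussian density. -/
def gauss (x : ℝ) : ℝ := (Real.sqrt (2 * Real.pi))⁻¹ * Real.exp (-x ^ 2 / 2)

/-- `ν^λ(a) = (∂_a S)(a/λ)`. -/
def nu (S : (Fin K → ℝ) → ℝ) (lam : ℝ) (a : Fin K → ℝ) : Fin K → ℝ :=
  fun j => fderiv ℝ S (lam⁻¹ • a) (Pi.single j 1)

/-- `η^λ(a) = (∂²_a S)(a/λ)`. -/
def eta (S : (Fin K → ℝ) → ℝ) (lam : ℝ) (a : Fin K → ℝ) : Fin K → Fin K → ℝ :=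
  fun j k => fderiv ℝ (fun x => fderiv ℝ S x (Pi.single k 1)) (lam⁻¹ • a) (Pi.single j 1)

/-- The maximum of a vector `a : Fin K → ℝ` (needs `0 < K`). -/
def fmax (hK : 0 < K) (a : Fin K → ℝ) : ℝ :=
  Finset.univ.sup' ⟨⟨0, hK⟩, Finset.mem_univ _⟩ a

/-- A smooth max approximator. -/
structure IsSmoothMax (hK : 0 < K) (S : (Fin K → ℝ) → ℝ) : Prop where
  smooth : ContDiff ℝ 3 S
  bddDeriv : ∃ C : ℝ, ∀ x, ∀ k ∈ ({1, 2, 3} : Finset ℕ), ‖iteratedFDeriv ℝ k S x‖ ≤ C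
  mono : Monotone S
  translate : ∀ (a : Fin K → ℝ) (c : ℝ), S (fun i => a i + c) = S a + c
  convex : ConvexOn ℝ Set.univ S
  approx : ∀ ε > (0 : ℝ), ∃ δ > (0 : ℝ), ∀ lam : ℝ, 0 < lam → lam < δ →
    ∀ a : Fin K → ℝ, |lam * S (lam⁻¹ • a) - fmax hK a| ≤ ε

/-- Partial gradient in `m` of `f_j` (matrix-valued `d`). -/
def gradMm (f : Fin K → (Fin p → ℝ) → (Fin p → Fin p → ℝ) → ℝ) (j : Fin K)
    (m : Fin p → ℝ) (d : Fin p → Fin p → ℝ) : Fin p → ℝ :=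
  fun k => fderiv ℝ (fun m' => f j m' d) m (Pi.single k 1)

/-- Partial gradient in the matrix variable `d` of `f_j`, as a `p × p` matrix. -/
def gradDm (f : Fin K → (Fin p → ℝ) → (Fin p → Fin p → ℝ) → ℝ) (j : Fin K)
    (m : Fin p → ℝ) (d : Fin p → Fin p → ℝ) : Fin p → Fin p → ℝ :=
  fun k l => fderiv ℝ (fun d' => f j m d') d (Pi.single k (Pi.single l 1))

/-- Hessian in `m` of `f_j`, as a `p × p` matrix (matrix-valued `d`). -/
def hessMm (f : Fin K → (Fin p → ℝ) → (Fin p → Fin p → ℝ) → ℝ) (j : Fin K)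
    (m : Fin p → ℝ) (d : Fin p → Fin p → ℝ) : Fin p → Fin p → ℝ :=
  fun k l =>
    fderiv ℝ (fun m' => fderiv ℝ (fun m'' => f j m'' d) m' (Pi.single l 1)) m (Pi.single k 1)

/-- The learning premium `L^λ(m,d) ∈ ℝ^K` in the case where the `d`-variable is a
`p × p` matrix, parametrised by the softmax `nuF` and its derivative `etaF`
(both already evaluated at scale `λ`), with `σσᵀ` supplied as `ssT`. -/
def Lmat (nuF : (Fin K → ℝ) → Fin K → ℝ) (etaF : (Fin K → ℝ) → Fin K → Fin K → ℝ)
    (lam : ℝ) (f : Fin K → (Fin p → ℝ) → (Fin p → Fin p → ℝ) → ℝ)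
    (μ : Fin K → (Fin p → ℝ) → (Fin p → Fin p → ℝ) → Fin p → ℝ)
    (b ssT : Fin K → (Fin p → ℝ) → (Fin p → Fin p → ℝ) → Fin p → Fin p → ℝ)
    (m : Fin p → ℝ) (d : Fin p → Fin p → ℝ) : Fin K → ℝ :=
  fun i =>
    (∑ k, ∑ l, (∑ j, nuF (fun j' => f j' m d) j * gradDm f j m d k l) * b i m d k l) +
    (∑ k, (∑ j, nuF (fun j' => f j' m d) j * gradMm f j m d k) * μ i m d k) +
    (1 / 2) * ∑ k, ∑ l,
      ((∑ j, nuF (fun j' => f j' m d) j * hessMm f j m d k l) +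
        lam⁻¹ * ∑ j, ∑ j', etaF (fun j'' => f j'' m d) j j' *
          gradMm f j m d k * gradMm f j' m d l) *
      ssT i m d k l

/-- Polynomial growth of `r` together with its first two derivatives. -/
def PolyGrowth2 (r : ℝ → ℝ) : Prop :=
  ∃ (C : ℝ) (n : ℕ), ∀ x : ℝ,
    |r x| ≤ C * (1 + |x|) ^ n ∧ |deriv r x| ≤ C * (1 + |x|) ^ n ∧
    |deriv (deriv r) x| ≤ C * (1 + |x|) ^ n

end ARC
namespace ARC

/-- Shannon softmax `ν^λ_j(a) = e^{a_j/λ} / ∑_k e^{a_k/λ}`. -/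
def nuSh {K : ℕ} (lam : ℝ) (a : Fin K → ℝ) : Fin K → ℝ :=
  fun j => Real.exp (a j / lam) / ∑ k, Real.exp (a k / lam)

/-- Shannon `η^λ_{jk}(a) = ν^λ_j(a)(1(j=k) - ν^λ_k(a))`. -/
def etaSh {K : ℕ} (lam : ℝ) (a : Fin K → ℝ) : Fin K → Fin K → ℝ :=
  fun j k => nuSh lam a j * ((if j = k then 1 else 0) - nuSh lam a k)

end ARC

/-! Since `μ = 0` and `b = -σσᵀ`, the first-order term in `d` cancels the Hessian term in `m` as
soon as `∂_d f_j = ½ ∂²_m f_j`. This is the heat equation for the Gaussian smoothing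
`f_j(m, d) = 𝔼[r_j(c_jᵀm + (c_jᵀ d c_j + P_j⁻¹)^{1/2} Z)]`: differentiate under the integral and
apply Stein's lemma `𝔼[ψ(Z) Z] = 𝔼[ψ'(Z)]`. What remains is
`(2λ)⁻¹ ⟨∑ η_{jk} ∂_m f_j (∂_m f_k)ᵀ ; σσᵀ⟩`, where `∂_m f_j = g_j c_j` and
`σσᵀ = (d c_i)(d c_i)ᵀ / (c_iᵀ d c_i + P_i⁻¹)` has rank one, so it collapses to a multiple of the
`ν`-variance of `j ↦ g_j c_iᵀ d c_j`. -/

namespace ARC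

open Real

lemma gauss_nonneg (x : ℝ) : 0 ≤ gauss x := by
  unfold gauss; positivity

@[fun_prop]
lemma continuous_gauss : Continuous gauss := by
  unfold gauss; fun_prop

lemma hasDerivAt_gauss (x : ℝ) : HasDerivAt gauss (-x * gauss x) x := by
  have h : HasDerivAt (fun y : ℝ => -y ^ 2 / 2) (-x) x :=
    ((hasDerivAt_pow 2 x).neg.div_const 2).congr_deriv (by norm_num; ring)
  unfold gauss
  exact (((Real.hasDerivAt_exp _).comp x h).const_mul _).congr_deriv (by ring)

lemma one_add_abs_pow_mul_gauss_le (n : ℕ) (x : ℝ) :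
    (1 + |x|) ^ n * gauss x ≤ (√(2 * π))⁻¹ * exp ((n : ℝ) ^ 2) * exp (-(1 / 4) * x ^ 2) := by
  have hpow : (1 + |x|) ^ n ≤ exp (n * |x|) := by
    rw [Real.exp_nat_mul]
    gcongr
    linarith [Real.add_one_le_exp |x|]
  -- `n |x| ≤ n² + x²/4`
  have hexp : exp (n * |x|) * exp (-x ^ 2 / 2) ≤ exp ((n : ℝ) ^ 2) * exp (-(1 / 4) * x ^ 2) := by
    rw [← Real.exp_add, ← Real.exp_add, Real.exp_le_exp]
    nlinarith [sq_nonneg (|x| / 2 - n), sq_abs x]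
  unfold gauss
  calc (1 + |x|) ^ n * ((√(2 * π))⁻¹ * exp (-x ^ 2 / 2))
      ≤ (√(2 * π))⁻¹ * (exp (n * |x|) * exp (-x ^ 2 / 2)) := by
        rw [mul_left_comm]; gcongr
    _ ≤ (√(2 * π))⁻¹ * (exp ((n : ℝ) ^ 2) * exp (-(1 / 4) * x ^ 2)) := by gcongr
    _ = _ := by ring

lemma integrable_one_add_abs_pow_mul_gauss (n : ℕ) :
    Integrable fun x : ℝ => (1 + |x|) ^ n * gauss x := by
  refine ((integrable_exp_neg_mul_sq (by norm_num : (0 : ℝ) < 1 / 4)).const_mul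
    ((√(2 * π))⁻¹ * exp ((n : ℝ) ^ 2))).mono' (by fun_prop : Continuous _).aestronglyMeasurable
    (.of_forall fun x => ?_)
  rw [Real.norm_of_nonneg (by have := gauss_nonneg x; positivity)]
  exact one_add_abs_pow_mul_gauss_le n x

lemma integrable_mul_gauss {ψ : ℝ → ℝ} (hψ : Continuous ψ) {C : ℝ} {n : ℕ}
    (hb : ∀ x, |ψ x| ≤ C * (1 + |x|) ^ n) : Integrable fun x => ψ x * gauss x := by
  refine ((integrable_one_add_abs_pow_mul_gauss n).const_mul C).mono'
    (hψ.mul continuous_gauss).aestronglyMeasurable (.of_forall fun x => ?_)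
  rw [Real.norm_eq_abs, abs_mul, abs_of_nonneg (gauss_nonneg x), ← mul_assoc]
  exact mul_le_mul_of_nonneg_right (hb x) (gauss_nonneg x)

lemma abs_mul_le_pow_succ {ψ : ℝ → ℝ} {C : ℝ} {n : ℕ} (hb : ∀ x, |ψ x| ≤ C * (1 + |x|) ^ n)
    (x : ℝ) : |ψ x * x| ≤ C * (1 + |x|) ^ (n + 1) := by
  rw [abs_mul, pow_succ, ← mul_assoc]
  exact mul_le_mul (hb x) (by linarith) (abs_nonneg x)
    ((abs_nonneg _).trans (hb x))

lemma abs_add_mul_le (α β x : ℝ) : |α + β * x| ≤ (|α| + |β|) * (1 + |x|) := by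
  have := abs_add_le α (β * x)
  rw [abs_mul] at this
  nlinarith [abs_nonneg x, abs_nonneg α, abs_nonneg β]

lemma abs_comp_affine_le {ψ : ℝ → ℝ} {C : ℝ} {n : ℕ} (hC : 0 ≤ C)
    (hb : ∀ y, |ψ y| ≤ C * (1 + |y|) ^ n) {α β M : ℝ} (hM : |α| + |β| ≤ M) (x : ℝ) :
    |ψ (α + β * x)| ≤ C * (1 + M) ^ n * (1 + |x|) ^ n := by
  have h : 1 + |α + β * x| ≤ (1 + M) * (1 + |x|) := by
    nlinarith [abs_add_mul_le α β x, abs_nonneg x]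
  calc |ψ (α + β * x)| ≤ C * (1 + |α + β * x|) ^ n := hb _
    _ ≤ C * ((1 + M) * (1 + |x|)) ^ n := by gcongr
    _ = C * (1 + M) ^ n * (1 + |x|) ^ n := by rw [mul_pow, mul_assoc]

/-- Stein's lemma. -/
lemma integral_mul_mul_gauss_eq {ψ ψ' : ℝ → ℝ} (hd : ∀ x, HasDerivAt ψ (ψ' x) x)
    (hc' : Continuous ψ') {C₀ C₁ : ℝ} {n₀ n₁ : ℕ}
    (hb : ∀ x, |ψ x| ≤ C₀ * (1 + |x|) ^ n₀) (hb' : ∀ x, |ψ' x| ≤ C₁ * (1 + |x|) ^ n₁) :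
    ∫ x, ψ x * (x * gauss x) = ∫ x, ψ' x * gauss x := by
  have hc : Continuous ψ := continuous_iff_continuousAt.2 fun x => (hd x).continuousAt
  have hxψ : Integrable fun x => ψ x * (-x * gauss x) := by
    have := integrable_mul_gauss (ψ := fun x => ψ x * x) (by fun_prop) (abs_mul_le_pow_succ hb)
    exact this.neg.congr (.of_forall fun x => by simp only [Pi.neg_apply]; ring)
  have h := integral_mul_deriv_eq_deriv_mul_of_integrable (fun x _ => hd x)
    (fun x _ => hasDerivAt_gauss x) hxψ (integrable_mul_gauss hc' hb')
    (integrable_mul_gauss hc hb)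
  simp only [neg_mul, mul_neg, integral_neg, neg_inj] at h
  exact h

/-- `gaussMean φ a s = 𝔼[φ(a + sZ)]` for a standard Gaussian `Z`. -/
def gaussMean (φ : ℝ → ℝ) (a s : ℝ) : ℝ := ∫ x, φ (a + s * x) * gauss x

section Differentiation

variable {φ φ' : ℝ → ℝ} (hd : ∀ y, HasDerivAt φ (φ' y) y) (hc' : Continuous φ')
  {C₀ C₁ : ℝ} {n₀ n₁ : ℕ}
  (hb : ∀ y, |φ y| ≤ C₀ * (1 + |y|) ^ n₀) (hb' : ∀ y, |φ' y| ≤ C₁ * (1 + |y|) ^ n₁)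
include hd hc' hb hb'

lemma hasDerivAt_gaussMean_affine (a s u w t₀ : ℝ) :
    HasDerivAt (fun t => gaussMean φ (a + t * u) (s + t * w))
      (∫ x, φ' (a + t₀ * u + (s + t₀ * w) * x) * (u + w * x) * gauss x) t₀ := by
  have hC₀ : 0 ≤ C₀ := by simpa using (abs_nonneg _).trans (hb 0)
  have hC₁ : 0 ≤ C₁ := by simpa using (abs_nonneg _).trans (hb' 0)
  have hc : Continuous φ := continuous_iff_continuousAt.2 fun y => (hd y).continuousAt
  set M := |a| + |s| + (|t₀| + 1) * (|u| + |w|)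
  have hball : ∀ t ∈ Metric.ball t₀ 1, |a + t * u| + |s + t * w| ≤ M := by
    intro t ht
    have ht' : |t| ≤ |t₀| + 1 := by
      rw [Metric.mem_ball, Real.dist_eq] at ht
      linarith [abs_sub_abs_le_abs_sub t t₀]
    have hu := abs_add_le a (t * u)
    have hw := abs_add_le s (t * w)
    rw [abs_mul] at hu hw
    nlinarith [abs_nonneg u, abs_nonneg w]
  refine (hasDerivAt_integral_of_dominated_loc_of_deriv_le (Metric.ball_mem_nhds t₀ one_pos)
    (F' := fun t x => φ' (a + t * u + (s + t * w) * x) * (u + w * x) * gauss x)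
    (bound := fun x => C₁ * (1 + M) ^ n₁ * (|u| + |w|) * ((1 + |x|) ^ (n₁ + 1) * gauss x))
    (.of_forall fun t => (by fun_prop : Continuous _).aestronglyMeasurable)
    (integrable_mul_gauss (by fun_prop)
      (abs_comp_affine_le hC₀ hb (hball t₀ (Metric.mem_ball_self one_pos))))
    (by fun_prop : Continuous _).aestronglyMeasurable
    (.of_forall fun x t ht => ?_)
    ((integrable_one_add_abs_pow_mul_gauss _).const_mul _)
    (.of_forall fun x t _ => ?_)).2
  · rw [Real.norm_eq_abs, abs_mul, abs_mul, abs_of_nonneg (gauss_nonneg x)]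
    calc |φ' (a + t * u + (s + t * w) * x)| * |u + w * x| * gauss x
        ≤ (C₁ * (1 + M) ^ n₁ * (1 + |x|) ^ n₁) * ((|u| + |w|) * (1 + |x|)) * gauss x := by
          have hφ' := abs_comp_affine_le hC₁ hb' (hball t ht) x
          exact mul_le_mul_of_nonneg_right (mul_le_mul hφ' (abs_add_mul_le u w x) (abs_nonneg _)
            ((abs_nonneg _).trans hφ')) (gauss_nonneg x)
      _ = _ := by ring
  · have hin : HasDerivAt (fun t => a + t * u + (s + t * w) * x) (u + w * x) t := by
      have := (((hasDerivAt_id t).mul_const u).const_add a).add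
        ((((hasDerivAt_id t).mul_const w).const_add s).mul_const x)
      exact this.congr_deriv (by ring)
    exact ((hd _).comp t hin).mul_const (gauss x)

lemma hasDerivAt_gaussMean_shift (a s : ℝ) :
    HasDerivAt (fun t => gaussMean φ t s) (gaussMean φ' a s) a := by
  simpa [gaussMean] using hasDerivAt_gaussMean_affine hd hc' hb hb' 0 s 1 0 a

lemma hasDerivAt_gaussMean_scale (a s : ℝ) :
    HasDerivAt (fun t => gaussMean φ a t) (∫ x, φ' (a + s * x) * x * gauss x) s := by
  simpa [gaussMean] using hasDerivAt_gaussMean_affine hd hc' hb hb' a 0 0 1 s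

lemma integral_comp_mul_id_mul_gauss_eq (a s : ℝ) :
    ∫ x, φ (a + s * x) * x * gauss x = s * gaussMean φ' a s := by
  have hC₀ : 0 ≤ C₀ := by simpa using (abs_nonneg _).trans (hb 0)
  have hC₁ : 0 ≤ C₁ := by simpa using (abs_nonneg _).trans (hb' 0)
  have hd' : ∀ x, HasDerivAt (fun x => φ (a + s * x)) (s * φ' (a + s * x)) x := fun x =>
    ((hd _).comp x (((hasDerivAt_id x).const_mul s).const_add a)).congr_deriv (by simp; ring)
  have hb's : ∀ x, |s * φ' (a + s * x)| ≤ |s| * (C₁ * (1 + (|a| + |s|)) ^ n₁) * (1 + |x|) ^ n₁ :=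
    fun x => by
      rw [abs_mul, mul_assoc]
      exact mul_le_mul_of_nonneg_left (abs_comp_affine_le hC₁ hb' le_rfl x) (abs_nonneg s)
  calc ∫ x, φ (a + s * x) * x * gauss x
      = ∫ x, φ (a + s * x) * (x * gauss x) := by simp only [mul_assoc]
    _ = ∫ x, s * φ' (a + s * x) * gauss x :=
        integral_mul_mul_gauss_eq hd' (by fun_prop) (abs_comp_affine_le hC₀ hb le_rfl) hb's
    _ = s * gaussMean φ' a s := by
        rw [gaussMean, ← integral_const_mul]; simp only [mul_assoc]

end Differentiation

section PolyGrowth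

variable {r : ℝ → ℝ} (hr : ContDiff ℝ 2 r) (hg : PolyGrowth2 r)
include hr

lemma hasDerivAt_deriv_of_contDiff_two :
    (∀ y, HasDerivAt r (deriv r y) y) ∧ (∀ y, HasDerivAt (deriv r) (deriv (deriv r) y) y) ∧
      Continuous (deriv r) ∧ Continuous (deriv (deriv r)) := by
  have hr' : ContDiff ℝ 1 (deriv r) := hr.deriv'
  exact ⟨fun y => (hr.differentiable (by norm_num) y).hasDerivAt,
    fun y => (hr'.differentiable one_ne_zero y).hasDerivAt,
    hr.continuous_deriv (by norm_num), hr'.continuous_deriv le_rfl⟩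

include hg

lemma hasDerivAt_gaussMean_shift_of_contDiff (a s : ℝ) :
    HasDerivAt (fun t => gaussMean r t s) (gaussMean (deriv r) a s) a := by
  obtain ⟨C, n, hb⟩ := hg
  obtain ⟨hd₁, -, hc₁, -⟩ := hasDerivAt_deriv_of_contDiff_two hr
  exact hasDerivAt_gaussMean_shift hd₁ hc₁ (fun y => (hb y).1) (fun y => (hb y).2.1) a s

lemma hasDerivAt_gaussMean_deriv_shift_of_contDiff (a s : ℝ) :
    HasDerivAt (fun t => gaussMean (deriv r) t s) (gaussMean (deriv (deriv r)) a s) a := by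
  obtain ⟨C, n, hb⟩ := hg
  obtain ⟨-, hd₂, -, hc₂⟩ := hasDerivAt_deriv_of_contDiff_two hr
  exact hasDerivAt_gaussMean_shift hd₂ hc₂ (fun y => (hb y).2.1) (fun y => (hb y).2.2) a s

/-- The heat equation: `∂ₛ 𝔼[r(a + sZ)] = 𝔼[r'(a + sZ) Z] = s 𝔼[r''(a + sZ)]`, and `s = √v` has
`ds/dv = 1 / (2s)`. -/
lemma hasDerivAt_gaussMean_sqrt (a : ℝ) {v : ℝ} (hv : 0 < v) :
    HasDerivAt (fun v => gaussMean r a √v) (gaussMean (deriv (deriv r)) a √v / 2) v := by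
  obtain ⟨C, n, hb⟩ := hg
  obtain ⟨hd₁, hd₂, hc₁, hc₂⟩ := hasDerivAt_deriv_of_contDiff_two hr
  have hscale := (hasDerivAt_gaussMean_scale hd₁ hc₁ (fun y => (hb y).1) (fun y => (hb y).2.1)
    a √v).comp v (Real.hasDerivAt_sqrt hv.ne')
  rw [integral_comp_mul_id_mul_gauss_eq hd₂ hc₂ (fun y => (hb y).2.1) (fun y => (hb y).2.2)]
    at hscale
  exact hscale.congr_deriv (by field_simp)

end PolyGrowth

section PartialDerivatives

variable {p : ℕ}

lemma fderiv_comp_sum_mul_apply_single (c : Fin p → ℝ) {G : ℝ → ℝ} {G' : ℝ} {m : Fin p → ℝ}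
    (hG : HasDerivAt G G' (∑ k, c k * m k)) (k : Fin p) :
    fderiv ℝ (fun m' => G (∑ k, c k * m' k)) m (Pi.single k 1) = G' * c k := by
  have hlin : HasFDerivAt (fun m' : Fin p → ℝ => ∑ k, c k * m' k)
      (∑ k, c k • ContinuousLinearMap.proj (R := ℝ) k) m :=
    HasFDerivAt.fun_sum fun k _ => (hasFDerivAt_apply (𝕜 := ℝ) k m).const_mul (c k)
  have h : HasFDerivAt (fun m' => G (∑ k, c k * m' k)) _ m := hG.comp_hasFDerivAt m hlin
  rw [h.fderiv]
  simp [Pi.single_apply]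

lemma fderiv_comp_sum_sum_mul_apply_single (c : Fin p → ℝ) {G : ℝ → ℝ} {G' : ℝ}
    {d : Fin p → Fin p → ℝ} (hG : HasDerivAt G G' (∑ k, ∑ l, c k * d k l * c l)) (k l : Fin p) :
    fderiv ℝ (fun d' => G (∑ k, ∑ l, c k * d' k l * c l)) d (Pi.single k (Pi.single l 1)) =
      G' * (c k * c l) := by
  have hquad : HasFDerivAt (fun d' : Fin p → Fin p → ℝ => ∑ k, ∑ l, c k * d' k l * c l)
      (∑ k, ∑ l, (c k * c l) • (ContinuousLinearMap.proj (R := ℝ) l).comp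
        (ContinuousLinearMap.proj (R := ℝ) (φ := fun _ => Fin p → ℝ) k)) d := by
    refine HasFDerivAt.fun_sum fun k _ => HasFDerivAt.fun_sum fun l _ => ?_
    have := ((hasFDerivAt_apply (𝕜 := ℝ) l (d k)).comp d
      (hasFDerivAt_apply (𝕜 := ℝ) k d)).const_mul (c k * c l)
    exact this.congr_of_eventuallyEq (.of_forall fun d' => by simp only [Function.comp_apply]; ring)
  have h : HasFDerivAt (fun d' => G (∑ k, ∑ l, c k * d' k l * c l)) _ d :=
    hG.comp_hasFDerivAt d hquad
  rw [h.fderiv]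
  simp [Pi.single_apply, ite_apply]

end PartialDerivatives

/-- `f_i(m, d)` for `c = c_i` and `τ = P_i⁻¹`. -/
def expectedReward {p : ℕ} (r : ℝ → ℝ) (c : Fin p → ℝ) (τ : ℝ) (m : Fin p → ℝ)
    (d : Fin p → Fin p → ℝ) : ℝ :=
  gaussMean r (∑ k, c k * m k) √((∑ k, ∑ l, c k * d k l * c l) + τ)

section ExpectedReward

variable {p : ℕ} {r : ℝ → ℝ} (hr : ContDiff ℝ 2 r) (hg : PolyGrowth2 r) (c : Fin p → ℝ) (τ : ℝ)
  (m : Fin p → ℝ) (d : Fin p → Fin p → ℝ)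
include hr hg

lemma fderiv_expectedReward_mean (k : Fin p) :
    fderiv ℝ (fun m' => expectedReward r c τ m' d) m (Pi.single k 1) =
      expectedReward (deriv r) c τ m d * c k :=
  fderiv_comp_sum_mul_apply_single
    (G := fun t => gaussMean r t √((∑ k, ∑ l, c k * d k l * c l) + τ)) c
    (hasDerivAt_gaussMean_shift_of_contDiff hr hg _ _) k

lemma fderiv_fderiv_expectedReward_mean (k l : Fin p) :
    fderiv ℝ (fun m' => fderiv ℝ (fun m'' => expectedReward r c τ m'' d) m' (Pi.single l 1)) m
      (Pi.single k 1) = expectedReward (deriv (deriv r)) c τ m d * c l * c k := by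
  simp only [fderiv_expectedReward_mean hr hg]
  exact fderiv_comp_sum_mul_apply_single
    (G := fun t => gaussMean (deriv r) t √((∑ k, ∑ l, c k * d k l * c l) + τ) * c l) c
    ((hasDerivAt_gaussMean_deriv_shift_of_contDiff hr hg _ _).mul_const (c l)) k

lemma fderiv_expectedReward_cov (hτ : 0 < (∑ k, ∑ l, c k * d k l * c l) + τ) (k l : Fin p) :
    fderiv ℝ (fun d' => expectedReward r c τ m d') d (Pi.single k (Pi.single l 1)) =
      expectedReward (deriv (deriv r)) c τ m d / 2 * (c k * c l) :=
  fderiv_comp_sum_sum_mul_apply_single (G := fun q => gaussMean r (∑ k, c k * m k) √(q + τ)) c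
    ((hasDerivAt_gaussMean_sqrt hr hg _ hτ).comp_add_const _ _) k l

end ExpectedReward

lemma sum_sum_ite_sub_mul_mul {ι : Type*} [Fintype ι] [DecidableEq ι] (ν x : ι → ℝ) :
    ∑ j, ∑ j', ν j * ((if j = j' then 1 else 0) - ν j') * x j * x j' =
      ∑ j, ν j * x j ^ 2 - (∑ j, ν j * x j) ^ 2 := by
  simp only [mul_sub, sub_mul, Finset.sum_sub_distrib, mul_ite, mul_one, mul_zero, ite_mul,
    zero_mul, Finset.sum_ite_eq, Finset.mem_univ, if_true, sq, Finset.sum_mul_sum]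
  congr 1
  · exact Finset.sum_congr rfl fun j _ => by ring
  · exact Finset.sum_congr rfl fun j _ => Finset.sum_congr rfl fun j' _ => by ring

lemma sum_sum_mul_rank_one {ι κ : Type*} [Fintype ι] [Fintype κ] (E : ι → ι → ℝ)
    (u : ι → κ → ℝ) (w : κ → ℝ) (ρ : ℝ) :
    ∑ k, ∑ l, (∑ j, ∑ j', E j j' * u j k * u j' l) * (w k * w l * ρ) =
      ρ * ∑ j, ∑ j', E j j' * (∑ k, u j k * w k) * (∑ l, u j' l * w l) := by
  simp only [Finset.sum_mul, Finset.mul_sum]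
  conv_lhs => enter [2, k]; rw [Finset.sum_comm]
  rw [Finset.sum_comm]
  conv_lhs => enter [2, j, 2, k]; rw [Finset.sum_comm]
  conv_lhs => enter [2, j]; rw [Finset.sum_comm]
  conv_lhs => enter [2, j, 2, j']; rw [Finset.sum_comm]
  exact Finset.sum_congr rfl fun j _ => Finset.sum_congr rfl fun j' _ =>
    Finset.sum_congr rfl fun k _ => Finset.sum_congr rfl fun l _ => by ring

lemma Lmat_eq_of_gradDm_eq_hessMm_div_two {K p : ℕ} (nuF : (Fin K → ℝ) → Fin K → ℝ)
    (etaF : (Fin K → ℝ) → Fin K → Fin K → ℝ) (lam : ℝ)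
    (f : Fin K → (Fin p → ℝ) → (Fin p → Fin p → ℝ) → ℝ)
    (μ : Fin K → (Fin p → ℝ) → (Fin p → Fin p → ℝ) → Fin p → ℝ)
    (b ssT : Fin K → (Fin p → ℝ) → (Fin p → Fin p → ℝ) → Fin p → Fin p → ℝ)
    (m : Fin p → ℝ) (d : Fin p → Fin p → ℝ) (i : Fin K)
    (hμ : μ i m d = 0) (hb : b i m d = -ssT i m d)
    (hheat : ∀ j k l, gradDm f j m d k l = hessMm f j m d k l / 2) :
    Lmat nuF etaF lam f μ b ssT m d i = (2 * lam)⁻¹ * ∑ k, ∑ l,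
      (∑ j, ∑ j', etaF (fun j'' => f j'' m d) j j' * gradMm f j m d k * gradMm f j' m d l) *
        ssT i m d k l := by
  simp only [Lmat, hμ, hb, hheat, Pi.zero_apply, Pi.neg_apply, mul_zero, Finset.sum_const_zero,
    add_zero, mul_div_assoc', ← Finset.sum_div]
  simp only [Finset.mul_sum _ _ (1 / 2 : ℝ), Finset.mul_sum _ _ (2 * lam)⁻¹,
    ← Finset.sum_add_distrib]
  exact Finset.sum_congr rfl fun k _ => Finset.sum_congr rfl fun l _ => by ring

lemma sum_mul_sum_mul_eq_of_symm {ι : Type*} [Fintype ι] {d : ι → ι → ℝ}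
    (hd : ∀ k l, d k l = d l k) (u v : ι → ℝ) :
    ∑ k, v k * ∑ a, d k a * u a = ∑ k, ∑ l, u k * d k l * v l := by
  simp only [Finset.mul_sum]
  rw [Finset.sum_comm]
  exact Finset.sum_congr rfl fun k _ => Finset.sum_congr rfl fun l _ => by rw [hd]; ring

lemma Lmat_expectedReward_eq {K p : ℕ} (c : Fin K → Fin p → ℝ) (τ : Fin K → ℝ) (r : Fin K → ℝ → ℝ)
    (hr : ∀ j, ContDiff ℝ 2 (r j)) (hg : ∀ j, PolyGrowth2 (r j))
    (f : Fin K → (Fin p → ℝ) → (Fin p → Fin p → ℝ) → ℝ)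
    (hf : ∀ j, f j = expectedReward (r j) (c j) (τ j))
    (m : Fin p → ℝ) (d : Fin p → Fin p → ℝ) (hd : ∀ k l, d k l = d l k)
    (hτ : ∀ j, 0 < (∑ k, ∑ l, c j k * d k l * c j l) + τ j)
    (μ : Fin K → (Fin p → ℝ) → (Fin p → Fin p → ℝ) → Fin p → ℝ)
    (b ssT : Fin K → (Fin p → ℝ) → (Fin p → Fin p → ℝ) → Fin p → Fin p → ℝ) (i : Fin K)
    (hμ : μ i m d = 0) (hb : b i m d = -ssT i m d)
    (hssT : ∀ k l, ssT i m d k l = (∑ a, d k a * c i a) * (∑ a, d l a * c i a) *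
      ((∑ k, ∑ l, c i k * d k l * c i l) + τ i)⁻¹) (lam : ℝ) :
    Lmat (nuSh lam) (etaSh lam) lam f μ b ssT m d i =
      ((∑ k, ∑ l, c i k * d k l * c i l) + τ i)⁻¹ / (2 * lam) *
        ((∑ j, nuSh lam (fun j' => f j' m d) j * expectedReward (deriv (r j)) (c j) (τ j) m d ^ 2 *
            (∑ k, ∑ l, c i k * d k l * c j l) ^ 2) -
          (∑ j, nuSh lam (fun j' => f j' m d) j * expectedReward (deriv (r j)) (c j) (τ j) m d *
            (∑ k, ∑ l, c i k * d k l * c j l)) ^ 2) := by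
  set g := fun j => expectedReward (deriv (r j)) (c j) (τ j) m d
  set T := fun j => ∑ k, ∑ l, c i k * d k l * c j l
  have hgrad : ∀ j k, gradMm f j m d k = g j * c j k := fun j k => by
    rw [gradMm, hf j, fderiv_expectedReward_mean (hr j) (hg j)]
  have hheat : ∀ j k l, gradDm f j m d k l = hessMm f j m d k l / 2 := fun j k l => by
    rw [gradDm, hessMm, hf j, fderiv_expectedReward_cov (hr j) (hg j) _ _ _ _ (hτ j),
      fderiv_fderiv_expectedReward_mean (hr j) (hg j)]
    ring
  have hT : ∀ j, ∑ k, g j * c j k * ∑ a, d k a * c i a = g j * T j := fun j => by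
    show _ = g j * ∑ k, ∑ l, c i k * d k l * c j l
    rw [← sum_mul_sum_mul_eq_of_symm hd, Finset.mul_sum]
    exact Finset.sum_congr rfl fun k _ => by ring
  rw [Lmat_eq_of_gradDm_eq_hessMm_div_two _ _ _ _ _ _ _ _ _ _ hμ hb hheat]
  simp only [hgrad, hssT]
  rw [sum_sum_mul_rank_one _ (fun j k => g j * c j k)]
  simp only [hT, etaSh]
  rw [sum_sum_ite_sub_mul_mul]
  simp only [g, T, mul_pow, ← mul_assoc]
  ring

end ARC

theorem ARC.L_linear_bandit_general
    {K p : ℕ}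
    (m : Fin p → ℝ) (d : Fin p → Fin p → ℝ)
    (hdsym : ∀ k l, d k l = d l k)
    (hdpsd : ∀ v : Fin p → ℝ, 0 ≤ ∑ k, ∑ l, v k * d k l * v l)
    (c : Fin K → Fin p → ℝ) (Pprec : Fin K → ℝ) (hP : ∀ i, 0 < Pprec i)
    (rf : Fin K → ℝ → ℝ) (hrf : ∀ i, ContDiff ℝ 2 (rf i))
    (hgrowth : ∀ i, ARC.PolyGrowth2 (rf i))
    (f : Fin K → (Fin p → ℝ) → (Fin p → Fin p → ℝ) → ℝ)
    (hfdef : f = fun i m' d' => ∫ x : ℝ,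
      rf i ((∑ k, c i k * m' k) +
        Real.sqrt ((∑ k, ∑ l, c i k * d' k l * c i l) + (Pprec i)⁻¹) * x) * ARC.gauss x)
    (μ : Fin K → (Fin p → ℝ) → (Fin p → Fin p → ℝ) → Fin p → ℝ)
    (b ssT : Fin K → (Fin p → ℝ) → (Fin p → Fin p → ℝ) → Fin p → Fin p → ℝ)
    (hμ : μ = fun _ _ _ => 0)
    (hssT : ssT = fun i _ d' k l =>
      (∑ a, d' k a * c i a) * (∑ a, d' l a * c i a) *
        ((∑ k', ∑ l', c i k' * d' k' l' * c i l') + (Pprec i)⁻¹)⁻¹)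
    (hb : b = fun i m' d' k l => -(ssT i m' d' k l)) :
    ∀ (i : Fin K) (lam : ℝ), 0 < lam →
      ARC.Lmat (ARC.nuSh lam) (ARC.etaSh lam) lam f μ b ssT m d i =
        ((∑ k, ∑ l, c i k * d k l * c i l) + (Pprec i)⁻¹)⁻¹ / (2 * lam) *
          ((∑ j, ARC.nuSh lam (fun j' => f j' m d) j *
              (∫ x : ℝ, deriv (rf j) ((∑ k, c j k * m k) +
                Real.sqrt ((∑ k, ∑ l, c j k * d k l * c j l) + (Pprec j)⁻¹) * x) *
                ARC.gauss x) ^ 2 *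
              (∑ k, ∑ l, c i k * d k l * c j l) ^ 2) -
            (∑ j, ARC.nuSh lam (fun j' => f j' m d) j *
              (∫ x : ℝ, deriv (rf j) ((∑ k, c j k * m k) +
                Real.sqrt ((∑ k, ∑ l, c j k * d k l * c j l) + (Pprec j)⁻¹) * x) *
                ARC.gauss x) *
              (∑ k, ∑ l, c i k * d k l * c j l)) ^ 2) := by
  intro i lam _
  subst hfdef hb hssT hμ
  exact Lmat_expectedReward_eq c (fun j => (Pprec j)⁻¹) rf hrf hgrowth _ (fun _ => rfl) m d hdsym
    (fun j => add_pos_of_nonneg_of_pos (hdpsd (c j)) (inv_pos.2 (hP j))) _ _ _ i rfl rfl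
    (fun _ _ => rfl) lam

/-- Lemma A.6: explicit learning premium for the one-dimensional linear Gaussian bandit
with Shannon entropy. -/
theorem ARC.L_linear_bandit
    {K p : ℕ} (hK : 0 < K) (hp : 0 < p)
    (m : Fin p → ℝ) (d : Fin p → Fin p → ℝ)
    (hdsym : ∀ k l, d k l = d l k)
    (hdpsd : ∀ v : Fin p → ℝ, 0 ≤ ∑ k, ∑ l, v k * d k l * v l)
    (c : Fin K → Fin p → ℝ) (Pprec : Fin K → ℝ) (hP : ∀ i, 0 < Pprec i)
    (rf : Fin K → ℝ → ℝ) (hrf : ∀ i, ContDiff ℝ 2 (rf i))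
    (hgrowth : ∀ i, ARC.PolyGrowth2 (rf i))
    (f : Fin K → (Fin p → ℝ) → (Fin p → Fin p → ℝ) → ℝ)
    (hfdef : f = fun i m' d' => ∫ x : ℝ,
      rf i ((∑ k, c i k * m' k) +
        Real.sqrt ((∑ k, ∑ l, c i k * d' k l * c i l) + (Pprec i)⁻¹) * x) * ARC.gauss x)
    (μ : Fin K → (Fin p → ℝ) → (Fin p → Fin p → ℝ) → Fin p → ℝ)
    (b ssT : Fin K → (Fin p → ℝ) → (Fin p → Fin p → ℝ) → Fin p → Fin p → ℝ)
    (hμ : μ = fun _ _ _ => 0)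
    (hssT : ssT = fun i _ d' k l =>
      (∑ a, d' k a * c i a) * (∑ a, d' l a * c i a) *
        ((∑ k', ∑ l', c i k' * d' k' l' * c i l') + (Pprec i)⁻¹)⁻¹)
    (hb : b = fun i m' d' k l => -(ssT i m' d' k l)) :
    ∀ (i : Fin K) (lam : ℝ), 0 < lam →
      ARC.Lmat (ARC.nuSh lam) (ARC.etaSh lam) lam f μ b ssT m d i =
        ((∑ k, ∑ l, c i k * d k l * c i l) + (Pprec i)⁻¹)⁻¹ / (2 * lam) *
          ((∑ j, ARC.nuSh lam (fun j' => f j' m d) j *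
              (∫ x : ℝ, deriv (rf j) ((∑ k, c j k * m k) +
                Real.sqrt ((∑ k, ∑ l, c j k * d k l * c j l) + (Pprec j)⁻¹) * x) *
                ARC.gauss x) ^ 2 *
              (∑ k, ∑ l, c i k * d k l * c j l) ^ 2) -
            (∑ j, ARC.nuSh lam (fun j' => f j' m d) j *
              (∫ x : ℝ, deriv (rf j) ((∑ k, c j k * m k) +
                Real.sqrt ((∑ k, ∑ l, c j k * d k l * c j l) + (Pprec j)⁻¹) * x) *
                ARC.gauss x) *
              (∑ k, ∑ l, c i k * d k l * c j l)) ^ 2) :=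
  ARC.L_linear_bandit_general m d hdsym hdpsd c Pprec hP rf hrf hgrowth f hfdef μ b ssT hμ hssT hb
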